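/- arXiv:1506.06166 — 3 statements merged into one kernel-verified Lean document; each statement's English description precedes it below -/
import Mathlib

section
/- Soundness of LP-Unif: if Φ ⊢ {A} ⇝*_γ ∅, i.e. the singleton query {A} reduces to the empty multiset by unification (LP-Unif) reductions with final accumulated substitution γ, then there exists a proof term e such that e : ∀x̄. ⇒ γA is derivable from the axioms Φ in the Horn-formulas-as-types system. -/
namespace SRes

/-- First-order terms: variables and function symbols applied to lists of terms. -/
inductive Tm : Type where
  | var : ℕ → Tm
  | fn : ℕ → List Tm → Tm

/-- First-order substitutions. -/
abbrev Subst := ℕ → Tm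

/-- Applying a substitution to a term. -/
def Tm.subst (σ : Subst) : Tm → Tm
  | .var x => σ x
  | .fn f ts => .fn f (ts.attach.map (fun t => Tm.subst σ t.1))
decreasing_by
  have := List.sizeOf_lt_of_mem t.2
  simp only [Tm.fn.sizeOf_spec]
  omega

/-- The identity substitution. -/
def Subst.id : Subst := Tm.var

/-- Composition of substitutions: `(Subst.comp θ γ) x = θ(γ(x))`. -/
def Subst.comp (θ γ : Subst) : Subst := fun x => (γ x).subst θ

/-- Free variables of a term. -/
def Tm.fv : Tm → Finset ℕ
  | .var x => {x}
  | .fn _ ts => (ts.attach.map (fun t => Tm.fv t.1)).foldr (· ∪ ·) ∅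
decreasing_by
  have := List.sizeOf_lt_of_mem t.2
  simp only [Tm.fn.sizeOf_spec]
  omega

/-- Function symbols occurring in a term. -/
def Tm.fns : Tm → Finset ℕ
  | .var _ => ∅
  | .fn f ts => insert f ((ts.attach.map (fun t => Tm.fns t.1)).foldr (· ∪ ·) ∅)
decreasing_by
  have := List.sizeOf_lt_of_mem t.2
  simp only [Tm.fn.sizeOf_spec]
  omega

/-- Atomic formulas `P(t1,...,tn)`. -/
structure Atom : Type where
  pred : ℕ
  args : List Tm

def Atom.subst (σ : Subst) (A : Atom) : Atom := ⟨A.pred, A.args.map (Tm.subst σ)⟩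

def Atom.fv (A : Atom) : Finset ℕ := (A.args.map Tm.fv).foldr (· ∪ ·) ∅

def Atom.fns (A : Atom) : Finset ℕ := (A.args.map Tm.fns).foldr (· ∪ ·) ∅

/-- Renaming the variables of an atom. -/
def Atom.rename (ρ : ℕ → ℕ) (A : Atom) : Atom := A.subst (fun x => .var (ρ x))

/-- `A.ext t'` is `A[t']`: add `t'` as an extra last argument of `A`. -/
def Atom.ext (A : Atom) (t : Tm) : Atom := ⟨A.pred, A.args ++ [t]⟩

def listFV (As : List Atom) : Finset ℕ := (As.map Atom.fv).foldr (· ∪ ·) ∅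

def listFns (As : List Atom) : Finset ℕ := (As.map Atom.fns).foldr (· ∪ ·) ∅

/-- Free variables of a multiset of atoms. -/
def mFV (G : Multiset Atom) : Finset ℕ := (G.map Atom.fv).sup

/-- A logic program: a finite list of axioms `κ : ∀x̄. body ⇒ head`
(each axiom is implicitly universally closed). -/
abbrev Prog := List (ℕ × List Atom × Atom)

def progFns (Φ : Prog) : Finset ℕ :=
  (Φ.map (fun r => r.2.2.fns ∪ listFns r.2.1)).foldr (· ∪ ·) ∅

/-! ### Proof terms (de Bruijn representation for bound proof variables) -/

inductive Pf : Type where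
  | const : ℕ → Pf           -- proof-term constants κ
  | bvar : ℕ → Pf            -- proof-term variables a (de Bruijn)
  | lam : Pf → Pf            -- λa.e
  | app : Pf → Pf → Pf       -- e e'

/-- Lift de Bruijn indices `≥ c` by `d`. -/
def Pf.lift (c d : ℕ) : Pf → Pf
  | .const k => .const k
  | .bvar i => if i < c then .bvar i else .bvar (i + d)
  | .lam p => .lam (p.lift (c+1) d)
  | .app p q => .app (p.lift c d) (q.lift c d)

/-- Substitute `q` for de Bruijn index `k` in a proof term. -/
def Pf.subst (k : ℕ) (q : Pf) : Pf → Pf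
  | .const c => .const c
  | .bvar i => if i < k then .bvar i else if i = k then q.lift 0 k else .bvar (i - 1)
  | .lam p => .lam (Pf.subst (k+1) q p)
  | .app p p' => .app (Pf.subst k q p) (Pf.subst k q p')

/-- Beta-reduction on proof terms: congruence closure of `(λa.p) p' →β [p'/a]p`. -/
inductive Beta : Pf → Pf → Prop where
  | beta (p q : Pf) : Beta (.app (.lam p) q) (p.subst 0 q)
  | appL {p p' q : Pf} : Beta p p' → Beta (.app p q) (.app p' q)
  | appR {p q q' : Pf} : Beta q q' → Beta (.app p q) (.app p q')
  | lam {p p' : Pf} : Beta p p' → Beta (.lam p) (.lam p')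

/-- A proof term is strongly normalizing if every β-reduction sequence from it is finite. -/
def Pf.SN (p : Pf) : Prop := Acc (fun a b => Beta b a) p

/-- β-normal proof terms. -/
def Pf.Normal (p : Pf) : Prop := ∀ q, ¬ Beta p q

/-- First-order proof terms: built from constants and variables by application only. -/
inductive Pf.FirstOrder : Pf → Prop where
  | const (κ : ℕ) : Pf.FirstOrder (.const κ)
  | bvar (a : ℕ) : Pf.FirstOrder (.bvar a)
  | app {p q : Pf} : Pf.FirstOrder p → Pf.FirstOrder q → Pf.FirstOrder (.app p q)

/-- `Pf.lams k p` is `λa1...λak. p`. -/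
def Pf.lams : ℕ → Pf → Pf
  | 0, p => p
  | n+1, p => .lam (Pf.lams n p)

/-- Apply a proof term to a list of proof terms, left associated. -/
def Pf.apps (p : Pf) : List Pf → Pf
  | [] => p
  | q :: qs => Pf.apps (.app p q) qs

/-- The proof term `λā.λb̄.(e2 b̄)(e1 ā)` produced by the cut rule
(`n` is the length of `ā`, `m` the length of `b̄`). -/
def cutTerm (n m : ℕ) (e₁ e₂ : Pf) : Pf :=
  Pf.lams (n + m) <|
    .app (Pf.apps (e₂.lift 0 (n+m)) ((List.range m).map (fun j => Pf.bvar (m - 1 - j))))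
         (Pf.apps (e₁.lift 0 (n+m)) ((List.range n).map (fun j => Pf.bvar (n + m - 1 - j))))

/-! ### Horn formulas as types -/

/-- Horn formulas `A1,...,An ⇒ B`, either unquantified (`horn`)
or universally closed over all their free term variables (`all`). -/
inductive Formula : Type where
  | horn : List Atom → Atom → Formula
  | all : List Atom → Atom → Formula

/-- The Horn-formulas-as-types typing judgment `e : F` relative to a program `Φ`. -/
inductive Derives (Φ : Prog) : Pf → Formula → Prop where
  | ax {κ : ℕ} {body : List Atom} {head : Atom} :
      (κ, body, head) ∈ Φ → Derives Φ (.const κ) (.all body head)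
  | gen {e : Pf} {body : List Atom} {head : Atom} :
      Derives Φ e (.horn body head) → Derives Φ e (.all body head)
  | inst {e : Pf} {body : List Atom} {head : Atom} (σ : Subst) :
      Derives Φ e (.all body head) →
      Derives Φ e (.horn (body.map (Atom.subst σ)) (head.subst σ))
  | cut {e₁ e₂ : Pf} {As Bs : List Atom} {D C : Atom} :
      Derives Φ e₁ (.horn As D) → Derives Φ e₂ (.horn (Bs ++ [D]) C) →
      Derives Φ (cutTerm As.length Bs.length e₁ e₂) (.horn (As ++ Bs) C)

/-! ### Reductions -/

def Unifies (γ : Subst) (A B : Atom) : Prop := A.subst γ = B.subst γ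

/-- `γ` is a most general unifier of `A` and `B`. -/
def IsMGU (γ : Subst) (A B : Atom) : Prop :=
  Unifies γ A B ∧ ∀ δ, Unifies δ A B → ∃ θ, δ = Subst.comp θ γ

/-- `(body, head)` is a freshly renamed copy of the axiom `κ` of `Φ`,
whose variables do not occur in the goal multiset `G`. -/
def FreshRuleFor (Φ : Prog) (κ : ℕ) (G : Multiset Atom)
    (body : List Atom) (head : Atom) : Prop :=
  ∃ (body₀ : List Atom) (head₀ : Atom) (ρ : ℕ → ℕ),
    (κ, body₀, head₀) ∈ Φ ∧ Function.Injective ρ ∧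
    body = body₀.map (Atom.rename ρ) ∧ head = head₀.rename ρ ∧
    Disjoint (listFV body ∪ head.fv) (mFV G)

/-- Term-matching (LP-TM) reduction step via axiom `κ`:
replace `Ai = σC` by `σB1,...,σBm`. -/
def TMStep (Φ : Prog) (κ : ℕ) (G G' : Multiset Atom) : Prop :=
  ∃ (body : List Atom) (head : Atom) (σ : Subst) (rest : Multiset Atom),
    (κ, body, head) ∈ Φ ∧ G = (head.subst σ) ::ₘ rest ∧
    G' = ↑(body.map (Atom.subst σ)) + rest

def TMred (Φ : Prog) (G G' : Multiset Atom) : Prop := ∃ κ, TMStep Φ κ G G'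

/-- `G` is in term-matching normal form. -/
def TMNF (Φ : Prog) (G : Multiset Atom) : Prop := ∀ G', ¬ TMred Φ G G'

/-- `Φ` is productive: every term-matching reduction sequence is finite. -/
def Productive (Φ : Prog) : Prop := ∀ G, Acc (fun a b => TMred Φ b a) G

/-- Unification (LP-Unif) reduction step via axiom `κ` with most general unifier `γ`. -/
def UnifStepL (Φ : Prog) (κ : ℕ) (γ : Subst) (G G' : Multiset Atom) : Prop :=
  ∃ (A : Atom) (rest : Multiset Atom) (body : List Atom) (head : Atom),
    G = A ::ₘ rest ∧ FreshRuleFor Φ κ G body head ∧ IsMGU γ head A ∧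
    G' = ↑(body.map (Atom.subst γ)) + rest.map (Atom.subst γ)

/-- Substitutional reduction step via axiom `κ` with most general unifier `γ`. -/
def SubStepL (Φ : Prog) (κ : ℕ) (γ : Subst) (G G' : Multiset Atom) : Prop :=
  ∃ (A : Atom) (rest : Multiset Atom) (body : List Atom) (head : Atom),
    G = A ::ₘ rest ∧ FreshRuleFor Φ κ G body head ∧ IsMGU γ head A ∧
    G' = G.map (Atom.subst γ)

/-- Stateful LP-Unif reduction on pairs (goal multiset, accumulated substitution). -/
def unifR (Φ : Prog) (p q : Multiset Atom × Subst) : Prop :=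
  ∃ κ γ, UnifStepL Φ κ γ p.1 q.1 ∧ q.2 = Subst.comp γ p.2

/-- Stateful LP-Struct reduction `→^μ·↪^1`: term-matching reduce to `→`-normal form,
then perform at most one substitutional step. -/
def structR (Φ : Prog) (p q : Multiset Atom × Subst) : Prop :=
  ∃ G', Relation.ReflTransGen (TMred Φ) p.1 G' ∧ TMNF Φ G' ∧
    ((q.1 = G' ∧ q.2 = p.2) ∨ ∃ κ γ, SubStepL Φ κ γ G' q.1 ∧ q.2 = Subst.comp γ p.2)

/-- A multiset of queries succeeds by LP-Unif reduction. -/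
def UnifSucc (Φ : Prog) (G : Multiset Atom) : Prop :=
  ∃ γ, Relation.ReflTransGen (unifR Φ) (G, Subst.id) (0, γ)

/-- A multiset of queries succeeds by LP-Struct reduction. -/
def StructSucc (Φ : Prog) (G : Multiset Atom) : Prop :=
  ∃ γ, Relation.ReflTransGen (structR Φ) (G, Subst.id) (0, γ)

/-- `Φ` is non-overlapping: heads of distinct axioms have no common instance. -/
def NonOverlapping (Φ : Prog) : Prop :=
  ∀ κ body head κ' body' head', (κ, body, head) ∈ Φ → (κ', body', head') ∈ Φ → κ ≠ κ' →
    ∀ σ δ : Subst, head.subst σ ≠ head'.subst δ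

/-! ### Realizability transformation -/

def ruleFV (body : List Atom) (head : Atom) : Finset ℕ := listFV body ∪ head.fv

/-- `extBody [A1,...,Am] [y1,...,ym] = [A1[y1],...,Am[ym]]`. -/
def extBody (As : List Atom) (ys : List ℕ) : List Atom :=
  List.zipWith (fun A y => A.ext (Tm.var y)) As ys

/-- Realizability transformation of a single axiom `κ : ∀x̄. A1,...,Am ⇒ B`
into `κ : ∀x̄∀ȳ. A1[y1],...,Am[ym] ⇒ B[f_κ(y1,...,ym)]` with fresh distinct `ȳ`. -/
def transRule (fsym : ℕ → ℕ) (κ : ℕ) (body : List Atom) (head : Atom) : List Atom × Atom :=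
  let N := (ruleFV body head).sup id + 1
  let ys := (List.range body.length).map (fun i => N + i)
  (extBody body ys, head.ext (.fn (fsym κ) (ys.map Tm.var)))

/-- The realizability transformation `F(Φ)`. -/
def transProg (fsym : ℕ → ℕ) (Φ : Prog) : Prog :=
  Φ.map (fun r => (r.1, transRule fsym r.1 r.2.1 r.2.2))

/-- `fsym` assigns a fresh function symbol `f_κ` to each proof-term constant `κ`. -/
def FreshSyms (fsym : ℕ → ℕ) (Φ : Prog) : Prop :=
  Function.Injective fsym ∧ ∀ κ, fsym κ ∉ progFns Φ

/-- The representation `⟦·⟧_φ` of first-order normal proof terms as first-order terms: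
`⟦a⟧_φ = φ(a)` and `⟦κ p1 ... pn⟧_φ = f_κ(⟦p1⟧_φ,...,⟦pn⟧_φ)`. -/
inductive PfRep (fsym : ℕ → ℕ) (φ : ℕ → Tm) : Pf → Tm → Prop where
  | bvar (a : ℕ) : PfRep fsym φ (.bvar a) (φ a)
  | app (κ : ℕ) (ps : List Pf) (ts : List Tm) (hlen : ps.length = ts.length)
      (h : ∀ pt ∈ ps.zip ts, PfRep fsym φ pt.1 pt.2) :
      PfRep fsym φ (Pf.apps (.const κ) ps) (.fn (fsym κ) ts)

/-- The map `[ȳ/ā]` sending the bound proof variables `a1,...,ak` (de Bruijn) of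
`λa1...ak.n` to the first-order variables `y1,...,yk`. -/
def mkPhi (ys : List ℕ) : ℕ → Tm := fun j => Tm.var (ys.getD (ys.length - 1 - j) 0)

/-!
Along a successful LP-Unif derivation `(G, σ) ⇝* (∅, γ)` we maintain a substitution `θ` with
`γ = θ ∘ σ` such that every `θ`-instance of a goal in `G` is provable. At `∅` take `θ = id`.
Going back over a step that resolves `A` against a renamed axiom `body ⇒ head` with mgu `γ₁`,
the new witness is `θ ∘ γ₁`: since `γ₁` unifies `head` and `A`, the goal `A` becomes an instance
of the axiom whose body atoms are the already provable `θ`-instances of the new goals, and the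
body is discharged by cuts.
-/

theorem Tm.subst_fn (σ : Subst) (f : ℕ) (ts : List Tm) :
    (Tm.fn f ts).subst σ = .fn f (ts.map (Tm.subst σ)) := by
  rw [Tm.subst, List.attach_map_val]

theorem Tm.subst_var (σ : Subst) (x : ℕ) : (Tm.var x).subst σ = σ x := by
  rw [Tm.subst]

theorem Tm.subst_id : ∀ t : Tm, t.subst Subst.id = t
  | .var x => Tm.subst_var _ x
  | .fn f ts => by
    rw [Tm.subst_fn, List.map_congr_left (fun t _ => Tm.subst_id t), List.map_id']

theorem Tm.subst_subst (θ γ : Subst) : ∀ t : Tm, (t.subst γ).subst θ = t.subst (Subst.comp θ γ)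
  | .var x => by rw [Tm.subst_var, Tm.subst_var]; rfl
  | .fn f ts => by
    rw [Tm.subst_fn, Tm.subst_fn, Tm.subst_fn, List.map_map]
    exact congrArg _ (List.map_congr_left fun t _ => Tm.subst_subst θ γ t)

theorem Atom.subst_subst (θ γ : Subst) (A : Atom) :
    (A.subst γ).subst θ = A.subst (Subst.comp θ γ) := by
  simp only [Atom.subst, List.map_map, Function.comp_def, Tm.subst_subst]

theorem Subst.id_comp (σ : Subst) : Subst.comp Subst.id σ = σ :=
  funext fun x => Tm.subst_id (σ x)

theorem Subst.comp_id (σ : Subst) : Subst.comp σ Subst.id = σ :=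
  funext fun x => Tm.subst_var σ x

theorem Subst.comp_assoc (θ γ σ : Subst) :
    Subst.comp θ (Subst.comp γ σ) = Subst.comp (Subst.comp θ γ) σ :=
  funext fun x => Tm.subst_subst θ γ (σ x)

def Provable (Φ : Prog) (A : Atom) : Prop := ∃ e, Derives Φ e (.horn [] A)

theorem Derives.provable_of_provable_body {Φ : Prog} {e : Pf} {C : Atom} :
    ∀ {Bs : List Atom}, Derives Φ e (.horn Bs C) → (∀ B ∈ Bs, Provable Φ B) → Provable Φ C := by
  intro Bs
  induction Bs using List.reverseRecOn generalizing e with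
  | nil => exact fun he _ => ⟨e, he⟩
  | append_singleton Bs D ih =>
    intro he hBs
    obtain ⟨e₁, he₁⟩ := hBs D (by simp)
    exact ih (by simpa using Derives.cut (As := []) he₁ he) fun B hB => hBs B (by simp [hB])

theorem FreshRuleFor.provable_head {Φ : Prog} {κ : ℕ} {G : Multiset Atom} {body : List Atom}
    {head : Atom} (hrule : FreshRuleFor Φ κ G body head) (θ : Subst)
    (hbody : ∀ B ∈ body, Provable Φ (B.subst θ)) : Provable Φ (head.subst θ) := by
  obtain ⟨body₀, head₀, ρ, hax, -, rfl, rfl, -⟩ := hrule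
  have hinst := Derives.inst (Subst.comp θ fun x => .var (ρ x)) (Derives.ax hax)
  simp only [← Atom.subst_subst] at hinst
  refine hinst.provable_of_provable_body ?_
  simpa [Atom.rename, Atom.subst_subst] using hbody

theorem UnifStepL.provable_subst {Φ : Prog} {κ : ℕ} {γ θ : Subst} {G G' : Multiset Atom}
    (hstep : UnifStepL Φ κ γ G G') (hG' : ∀ B ∈ G', Provable Φ (B.subst θ)) :
    ∀ A ∈ G, Provable Φ (A.subst (Subst.comp θ γ)) := by
  obtain ⟨A, rest, body, head, rfl, hrule, ⟨hunif, -⟩, rfl⟩ := hstep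
  have hinst : ∀ B, B ∈ body ∨ B ∈ rest → Provable Φ (B.subst (Subst.comp θ γ)) := by
    intro B hB
    rw [← Atom.subst_subst]
    exact hG' _ (Multiset.mem_add.2 (hB.imp (fun hB => by simpa using ⟨B, hB, rfl⟩)
      (Multiset.mem_map_of_mem _)))
  intro B hB
  rcases Multiset.mem_cons.mp hB with rfl | hB
  · rw [← Atom.subst_subst, ← hunif, Atom.subst_subst]
    exact hrule.provable_head _ fun D hD => hinst D (Or.inl hD)
  · exact hinst B (Or.inr hB)

theorem unifR_reflTransGen_provable {Φ : Prog} {γ : Subst} {p : Multiset Atom × Subst}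
    (h : Relation.ReflTransGen (unifR Φ) p (0, γ)) :
    ∃ θ, γ = Subst.comp θ p.2 ∧ ∀ A ∈ p.1, Provable Φ (A.subst θ) := by
  induction h using Relation.ReflTransGen.head_induction_on with
  | refl => exact ⟨Subst.id, (Subst.id_comp γ).symm, by simp⟩
  | head hstep _ ih =>
    obtain ⟨κ, γ₁, hstep, hσ⟩ := hstep
    obtain ⟨θ, hγ, hprov⟩ := ih
    exact ⟨Subst.comp θ γ₁, by rw [hγ, hσ, Subst.comp_assoc], hstep.provable_subst hprov⟩

/-- Soundness of LP-Unif: if `Φ ⊢ {A} ⇝*_γ ∅`, then there is a proof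
term `e` with `e : ∀x̄. ⇒ γA` derivable from `Φ`. -/
theorem lp_unif_sound (Φ : Prog) (A : Atom) (γ : Subst)
    (h : Relation.ReflTransGen (unifR Φ) ({A}, Subst.id) (0, γ)) :
    ∃ e : Pf, Derives Φ e (.all [] (A.subst γ)) := by
  obtain ⟨θ, hγ, hprov⟩ := unifR_reflTransGen_provable h
  rw [Subst.comp_id] at hγ
  obtain ⟨e, he⟩ := hγ ▸ hprov A (Multiset.mem_singleton_self A)
  exact ⟨e, Derives.gen he⟩

end SRes
end

section
/- Soundness of LP-TM: if Φ ⊢ {A} →* ∅, i.e. the singleton query {A} reduces to the empty multiset by term-matching (LP-TM) reductions, then there exists a proof term e such that e : ∀x̄. ⇒ A is derivable from the axioms Φ in the Horn-formulas-as-types system (no substitution is applied to A). -/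
namespace SRes

lemma discharge (Φ : Prog) : ∀ L : List Atom, ∀ C : Atom, ∀ e : Pf,
    Derives Φ e (.horn L C) →
    (∀ B ∈ L, ∃ e', Derives Φ e' (.horn [] B)) →
    ∃ e', Derives Φ e' (.horn [] C) := by
  intro L
  induction L using List.reverseRecOn with
  | nil => intro C e h _; exact ⟨e, h⟩
  | append_singleton Bs D ih =>
    intro C e h hall
    obtain ⟨eD, hD⟩ := hall D (by simp)
    have hcut := Derives.cut hD h
    rw [List.nil_append] at hcut
    exact ih C _ hcut (fun B hB => hall B (by simp [hB]))

lemma all_derivable (Φ : Prog) (G : Multiset Atom)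
    (h : Relation.ReflTransGen (TMred Φ) G 0) :
    ∀ B ∈ G, ∃ e, Derives Φ e (.horn [] B) := by
  induction h using Relation.ReflTransGen.head_induction_on with
  | refl => intro B hB; simp at hB
  | head hstep _ ih =>
    obtain ⟨κ, body, head, σ, rest, hmem, hG, hG'⟩ := hstep
    intro B hB
    rw [hG, Multiset.mem_cons] at hB
    rcases hB with hB | hB
    · subst hB
      have hax : Derives Φ (.const κ) (.horn (body.map (Atom.subst σ)) (head.subst σ)) :=
        Derives.inst σ (Derives.ax hmem)
      refine discharge Φ _ _ _ hax (fun B' hB' => ih B' ?_)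
      rw [hG', Multiset.mem_add]
      exact Or.inl (by exact_mod_cast hB')
    · exact ih B (by rw [hG', Multiset.mem_add]; exact Or.inr hB)

/-- Soundness of LP-TM: if `Φ ⊢ {A} →* ∅`, then there is a proof term
`e` with `e : ∀x̄. ⇒ A` derivable from `Φ` (no substitution applied to `A`). -/
theorem lp_tm_sound (Φ : Prog) (A : Atom)
    (h : Relation.ReflTransGen (TMred Φ) {A} 0) :
    ∃ e : Pf, Derives Φ e (.all [] A) := by
  obtain ⟨e, he⟩ := all_derivable Φ {A} h A (by simp)
  exact ⟨e, Derives.gen he⟩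

end SRes
end

section
/- The realizability transformation preserves provability: given axioms Φ, if e : [∀x̄.] A1,...,Am ⇒ B is derivable with e in β-normal form (so e is a constant κ or of the form λā.n with n first-order normal), then the transformed judgment is derivable from F(Φ): namely e : [∀x̄∀ȳ.] A1[y1],...,Am[ym] ⇒ B[t] with y1,...,ym fresh and distinct, where t = f_κ(y1,...,ym) if e = κ, and t = ⟦n⟧_{[ȳ/ā]} if e = λā.n. -/
namespace SRes

/-! The proof is an induction on the typing derivation, carrying along a transformed derivation
from `F(Φ)` for *some* list `ȳ` of fresh variables. Instantiation and cut rename `ȳ` by a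
substitution that agrees with the given one on the variables of the formula, which is harmless
because `ȳ` is fresh. In a cut, β-normality forces the right premise to be a constant `κ₂` and the
left premise to be a constant or, when it has no hypotheses, first order; so the cut term is
`λā.λb̄. κ₂ b̄ (e₁ ā)` and its realizer is `f_κ₂(ȳ_B, t₁)`. -/

theorem mem_foldr_union {x : ℕ} {l : List (Finset ℕ)} :
    x ∈ l.foldr (· ∪ ·) ∅ ↔ ∃ s ∈ l, x ∈ s := by
  induction l with
  | nil => simp
  | cons a l ih => simp [ih]

namespace Tm

@[elab_as_elim]
theorem induction_mem {P : Tm → Prop} (var : ∀ x, P (.var x))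
    (fn : ∀ f ts, (∀ t ∈ ts, P t) → P (.fn f ts)) (t : Tm) : P t := by
  induction t using Tm.subst.induct with
  | case1 x => exact var x
  | case2 f ts ih => exact fn f ts fun t ht => ih ⟨t, ht⟩

@[simp]
theorem subst_var_s7 (σ : Subst) (x : ℕ) : (Tm.var x).subst σ = σ x := by
  rw [Tm.subst]

theorem subst_fn_s7 (σ : Subst) (f : ℕ) (ts : List Tm) :
    (Tm.fn f ts).subst σ = .fn f (ts.map (Tm.subst σ)) := by
  rw [Tm.subst, List.map_attach_eq_pmap, List.pmap_eq_map]

theorem fv_fn (f : ℕ) (ts : List Tm) :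
    (Tm.fn f ts).fv = (ts.map Tm.fv).foldr (· ∪ ·) ∅ := by
  rw [Tm.fv, List.map_attach_eq_pmap, List.pmap_eq_map]

theorem subst_congr {σ σ' : Subst} (t : Tm) (h : ∀ x ∈ t.fv, σ x = σ' x) :
    t.subst σ = t.subst σ' := by
  induction t using Tm.induction_mem with
  | var x => simpa [Tm.fv] using h
  | fn f ts ih =>
    rw [subst_fn_s7, subst_fn_s7]
    refine congrArg _ (List.map_inj_left.2 fun t ht => ih t ht fun x hx => h x ?_)
    rw [fv_fn, mem_foldr_union]
    exact ⟨t.fv, List.mem_map_of_mem ht, hx⟩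

@[simp]
theorem subst_id_s7 (t : Tm) : t.subst Subst.id = t := by
  induction t using Tm.induction_mem with
  | var x => simp [Subst.id]
  | fn f ts ih =>
    rw [subst_fn_s7]
    exact congrArg _ ((List.map_congr_left ih).trans (List.map_id ts))

end Tm

namespace Atom

theorem subst_congr {σ σ' : Subst} {A : Atom} (h : ∀ x ∈ A.fv, σ x = σ' x) :
    A.subst σ = A.subst σ' := by
  refine congrArg _ (List.map_inj_left.2 fun t ht => t.subst_congr fun x hx => h x ?_)
  rw [Atom.fv, mem_foldr_union]
  exact ⟨t.fv, List.mem_map_of_mem ht, hx⟩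

@[simp]
theorem subst_id_s7 (A : Atom) : A.subst Subst.id = A := by
  simp [Atom.subst, List.map_id'' Tm.subst_id_s7]

theorem subst_ext (σ : Subst) (A : Atom) (t : Tm) :
    (A.ext t).subst σ = (A.subst σ).ext (t.subst σ) := by
  simp [Atom.ext, Atom.subst]

theorem fv_subset_listFV {A : Atom} {As : List Atom} (hA : A ∈ As) : A.fv ⊆ listFV As :=
  fun _ hx => mem_foldr_union.2 ⟨A.fv, List.mem_map_of_mem hA, hx⟩

end Atom

-- The choice of fresh variables `ȳ` made by `transRule`.
def freshVars (S : Finset ℕ) (L : ℕ) : List ℕ :=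
  (List.range L).map fun i => S.sup id + 1 + i

theorem freshVars_spec (S : Finset ℕ) (L : ℕ) :
    (freshVars S L).length = L ∧ (freshVars S L).Nodup ∧ Disjoint (freshVars S L).toFinset S := by
  refine ⟨by simp [freshVars], List.Nodup.map (fun a b h => by omega) List.nodup_range,
    Finset.disjoint_left.2 fun x hx hxS => ?_⟩
  obtain ⟨i, -, rfl⟩ := List.mem_map.1 (List.mem_toFinset.1 hx)
  have := Finset.le_sup (f := id) hxS
  simp only [id_eq] at this
  omega

def Subst.updateList : List ℕ → List Tm → Subst → Subst
  | k :: ks, v :: vs, σ => fun x => if x = k then v else updateList ks vs σ x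
  | _, _, σ => σ

namespace Subst

theorem updateList_of_not_mem {ks : List ℕ} {vs : List Tm} {σ : Subst} {x : ℕ} (h : x ∉ ks) :
    updateList ks vs σ x = σ x := by
  induction ks generalizing vs with
  | nil => cases vs <;> rfl
  | cons k ks ih =>
    cases vs with
    | nil => rfl
    | cons v vs =>
      rw [List.mem_cons, not_or] at h
      simp only [updateList, if_neg h.1]
      exact ih h.2

theorem updateList_getElem {ks : List ℕ} {vs : List Tm} {σ : Subst} (hks : ks.Nodup)
    (hvs : vs.length = ks.length) {i : ℕ} (hi : i < ks.length) :
    updateList ks vs σ ks[i] = vs[i] := by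
  induction ks generalizing vs i with
  | nil => simp at hi
  | cons k ks ih =>
    obtain ⟨hk, hks⟩ := List.nodup_cons.1 hks
    cases vs with
    | nil => simp at hvs
    | cons v vs =>
      cases i with
      | zero => simp [updateList]
      | succ j =>
        have hj : j < ks.length := by simpa using hi
        have hne : ks[j] ≠ k := fun h => hk (h ▸ List.getElem_mem hj)
        simp only [List.getElem_cons_succ, updateList, if_neg hne]
        exact ih hks (by simpa using hvs) hj

theorem map_var_subst_updateList {ks : List ℕ} {vs : List Tm} (σ : Subst) (hks : ks.Nodup)
    (hvs : vs.length = ks.length) :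
    (ks.map Tm.var).map (Tm.subst (updateList ks vs σ)) = vs :=
  List.ext_getElem (by simp [hvs]) fun i hi _ => by
    simp only [List.getElem_map, Tm.subst_var_s7]
    exact updateList_getElem hks hvs (by simpa using hi)

end Subst

theorem extBody_eq_zipWith (As : List Atom) (ys : List ℕ) :
    extBody As ys = List.zipWith Atom.ext As (ys.map Tm.var) := by
  rw [extBody, List.zipWith_map_right]

theorem extBody_length {As : List Atom} {ys : List ℕ} (h : ys.length = As.length) :
    (extBody As ys).length = As.length := by
  simp [extBody, h]

theorem extBody_append {As Bs : List Atom} {ys zs : List ℕ} (h : As.length = ys.length) :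
    extBody (As ++ Bs) (ys ++ zs) = extBody As ys ++ extBody Bs zs :=
  List.zipWith_append h

theorem extBody_map_subst (σ : Subst) (As : List Atom) (ys : List ℕ) :
    (extBody As ys).map (Atom.subst σ)
      = List.zipWith Atom.ext (As.map (Atom.subst σ)) ((ys.map Tm.var).map (Tm.subst σ)) := by
  rw [extBody_eq_zipWith, List.map_zipWith, List.zipWith_map]
  simp only [Atom.subst_ext]

theorem mem_transProg {fsym : ℕ → ℕ} {Φ : Prog} {κ : ℕ} {body : List Atom} {head : Atom}
    (h : (κ, body, head) ∈ Φ) :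
    (κ, extBody body (freshVars (ruleFV body head) body.length),
      head.ext (.fn (fsym κ) ((freshVars (ruleFV body head) body.length).map Tm.var)))
      ∈ transProg fsym Φ :=
  List.mem_map.2 ⟨(κ, body, head), h, rfl⟩

namespace Derives

variable {Ψ : Prog} {e : Pf} {As : List Atom} {B : Atom}

theorem horn_of_all (h : Derives Ψ e (.all As B)) : Derives Ψ e (.horn As B) := by
  simpa [List.map_id'' Atom.subst_id_s7] using h.inst Subst.id

theorem subst_updateList {ys : List ℕ} {t : Tm}
    (h : Derives Ψ e (.horn (extBody As ys) (B.ext t))) (hys : ys.Nodup)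
    (hdj : Disjoint ys.toFinset (ruleFV As B)) (σ : Subst) {vs : List Tm}
    (hvs : vs.length = ys.length) :
    Derives Ψ e (.horn (List.zipWith Atom.ext (As.map (Atom.subst σ)) vs)
      ((B.subst σ).ext (t.subst (Subst.updateList ys vs σ)))) := by
  set τ := Subst.updateList ys vs σ
  have hτ : ∀ x ∈ ruleFV As B, τ x = σ x := fun x hx =>
    Subst.updateList_of_not_mem fun hy =>
      Finset.disjoint_left.1 hdj (List.mem_toFinset.2 hy) hx
  have hAs : As.map (Atom.subst τ) = As.map (Atom.subst σ) :=
    List.map_inj_left.2 fun A hA => Atom.subst_congr fun x hx =>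
      hτ x (Finset.mem_union_left _ (Atom.fv_subset_listFV hA hx))
  have hB : B.subst τ = B.subst σ :=
    Atom.subst_congr fun x hx => hτ x (Finset.mem_union_right _ hx)
  have h' := h.gen.inst τ
  rwa [extBody_map_subst, Subst.map_var_subst_updateList σ hys hvs, Atom.subst_ext, hAs, hB]
    at h'

end Derives

namespace Pf

def BVarsLT : ℕ → Pf → Prop
  | _, .const _ => True
  | k, .bvar a => a < k
  | k, .lam p => BVarsLT (k + 1) p
  | k, .app p q => BVarsLT k p ∧ BVarsLT k q

theorem BVarsLT.mono {p : Pf} {k k' : ℕ} (h : p.BVarsLT k) (hk : k ≤ k') : p.BVarsLT k' := by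
  induction p generalizing k k' with
  | const => trivial
  | bvar a => exact lt_of_lt_of_le h hk
  | lam p ih => exact ih h (by omega)
  | app p q ihp ihq => exact ⟨ihp h.1 hk, ihq h.2 hk⟩

theorem lift_eq_self_of_bVarsLT {p : Pf} {c : ℕ} (h : p.BVarsLT c) (d : ℕ) : p.lift c d = p := by
  induction p generalizing c with
  | const => rfl
  | bvar a => exact if_pos h
  | lam p ih => exact congrArg lam (ih h)
  | app p q ihp ihq => exact congrArg₂ app (ihp h.1) (ihq h.2)

theorem apps_append (p : Pf) (l₁ l₂ : List Pf) : apps p (l₁ ++ l₂) = apps (apps p l₁) l₂ := by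
  induction l₁ generalizing p with
  | nil => rfl
  | cons q qs ih => exact ih _

theorem bVarsLT_apps {p : Pf} {l : List Pf} {k : ℕ} :
    (apps p l).BVarsLT k ↔ p.BVarsLT k ∧ ∀ q ∈ l, q.BVarsLT k := by
  induction l generalizing p with
  | nil => simp [apps]
  | cons q qs ih =>
    simp only [apps, ih, BVarsLT, List.mem_cons, forall_eq_or_imp, and_assoc]

theorem bVarsLT_of_mem_bvars {n m N : ℕ} (hn : n ≤ m) (hm : m ≤ N) :
    ∀ q ∈ (List.range n).map (fun j => bvar (m - 1 - j)), q.BVarsLT N := by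
  simp only [List.mem_map, List.mem_range]
  rintro _ ⟨j, hj, rfl⟩
  show _ < _
  omega

theorem FirstOrder.apps {p : Pf} {l : List Pf} (hp : p.FirstOrder)
    (hl : ∀ q ∈ l, q.FirstOrder) : (Pf.apps p l).FirstOrder := by
  induction l generalizing p with
  | nil => exact hp
  | cons q qs ih => exact ih (hp.app (hl q List.mem_cons_self)) fun r hr => hl r (by simp [hr])

end Pf

theorem Beta.exists_lift {p q : Pf} (h : Beta p q) (c d : ℕ) : ∃ r, Beta (p.lift c d) r := by
  induction h generalizing c with
  | beta p q => exact ⟨_, .beta (p.lift (c + 1) d) (q.lift c d)⟩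
  | appL _ ih => let ⟨_, hr⟩ := ih c; exact ⟨_, .appL hr⟩
  | appR _ ih => let ⟨_, hr⟩ := ih c; exact ⟨_, .appR hr⟩
  | lam _ ih => let ⟨_, hr⟩ := ih (c + 1); exact ⟨_, .lam hr⟩

namespace Pf.Normal

variable {p q : Pf}

theorem of_lams {k : ℕ} (h : (lams k p).Normal) : p.Normal := by
  induction k with
  | zero => exact h
  | succ k ih => exact ih fun q hq => h _ (.lam hq)

theorem of_app (h : (app p q).Normal) : p.Normal ∧ q.Normal ∧ ∀ r, p ≠ .lam r := by
  refine ⟨fun p' hp => h _ (.appL hp), fun q' hq => h _ (.appR hq), ?_⟩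
  rintro r rfl
  exact h _ (.beta r q)

theorem of_apps {l : List Pf} (h : (apps p l).Normal) : p.Normal := by
  induction l generalizing p with
  | nil => exact h
  | cons q qs ih => exact (ih h).of_app.1

theorem ne_lam_of_apps {l : List Pf} (h : (apps p l).Normal) (hl : l ≠ []) :
    ∀ r, p ≠ .lam r := by
  obtain ⟨q, l, rfl⟩ := List.exists_cons_of_ne_nil hl
  exact (of_apps (p := .app p q) h).of_app.2.2

theorem ne_lam_of_app_apps {l : List Pf} (h : (app (apps p l) q).Normal) : ∀ r, p ≠ .lam r := by
  rw [show app (apps p l) q = apps p (l ++ [q]) from (apps_append p l [q]).symm] at h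
  exact h.ne_lam_of_apps (by simp)

theorem of_lift {c d : ℕ} (h : (p.lift c d).Normal) : p.Normal := fun _ hq =>
  (hq.exists_lift c d).elim h

theorem of_cutTerm {n m : ℕ} {e₁ e₂ : Pf} (h : (cutTerm n m e₁ e₂).Normal) :
    e₁.Normal ∧ e₂.Normal ∧ (∀ r, e₂ ≠ .lam r) ∧ (n ≠ 0 → ∀ r, e₁ ≠ .lam r) := by
  have hbody := of_lams h
  obtain ⟨hX, hY, -⟩ := hbody.of_app
  refine ⟨hY.of_apps.of_lift, hX.of_apps.of_lift, ?_, ?_⟩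
  · rintro r rfl
    exact hbody.ne_lam_of_app_apps (r.lift 1 (n + m)) rfl
  · rintro hn r rfl
    exact hY.ne_lam_of_apps (by simpa using hn) (r.lift 1 (n + m)) rfl

end Pf.Normal

theorem mkPhi_of_lt {ys : List ℕ} {a : ℕ} (ha : a < ys.length) :
    mkPhi ys a = .var ys[ys.length - 1 - a] := by
  rw [mkPhi, List.getD_eq_getElem]

theorem mkPhi_append_append {l₀ l l' : List ℕ} {j : ℕ} (hj : j < l.length) :
    mkPhi (l₀ ++ l ++ l') (l.length + l'.length - 1 - j) = .var l[j] := by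
  rw [mkPhi_of_lt (by simp; omega)]
  congr 1
  rw [List.getElem_append_left (by simp; omega), List.getElem_append_right (by simp; omega)]
  congr 1
  simp
  omega

namespace PfRep

variable {fsym : ℕ → ℕ} {φ : ℕ → Tm}

theorem const_apps {ps : List Pf} {ts : List Tm} (h : List.Forall₂ (PfRep fsym φ) ps ts)
    (κ : ℕ) : PfRep fsym φ (Pf.apps (.const κ) ps) (.fn (fsym κ) ts) :=
  .app κ ps ts h.length_eq fun _ hpt => List.forall₂_zip h hpt

/-- The bound variables `āₗ` of `λā₀.λāₗ.λā'.n`, listed outermost first, are represented by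
the corresponding variables `ȳₗ` under `[ȳ₀ȳₗȳ'/ā₀āₗā']`. -/
theorem forall₂_bvars (l₀ l l' : List ℕ) :
    List.Forall₂ (PfRep fsym (mkPhi (l₀ ++ l ++ l')))
      ((List.range l.length).map fun j => .bvar (l.length + l'.length - 1 - j))
      (l.map Tm.var) := by
  have hl : l.map Tm.var = (List.range l.length).map
      fun j => mkPhi (l₀ ++ l ++ l') (l.length + l'.length - 1 - j) :=
    List.ext_getElem (by simp) fun j hj _ => by
      simp only [List.getElem_map, List.getElem_range]
      rw [mkPhi_append_append (by simpa using hj)]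
  rw [hl, List.forall₂_map_left_iff, List.forall₂_map_right_iff, List.forall₂_same]
  exact fun _ _ => .bvar _

theorem firstOrder {n : Pf} {t : Tm} (h : PfRep fsym φ n t) : n.FirstOrder := by
  induction h with
  | bvar a => exact .bvar a
  | app κ ps ts hlen _ ih =>
    refine .apps (.const κ) fun p hp => ?_
    rw [← List.map_fst_zip hlen.le] at hp
    obtain ⟨pt, hpt, rfl⟩ := List.mem_map.1 hp
    exact ih pt hpt

theorem subst {φ' : ℕ → Tm} {σ : Subst} {k : ℕ} {n : Pf} {t : Tm} (h : PfRep fsym φ n t)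
    (hn : n.BVarsLT k) (hφ : ∀ a < k, φ' a = (φ a).subst σ) :
    PfRep fsym φ' n (t.subst σ) := by
  induction h with
  | bvar a => exact hφ a hn ▸ .bvar a
  | app κ ps ts hlen _ ih =>
    rw [Tm.subst_fn_s7]
    refine .app κ ps _ (by simp [hlen]) fun pt hpt => ?_
    rw [List.zip_map_right] at hpt
    obtain ⟨⟨p, s⟩, hmem, rfl⟩ := List.mem_map.1 hpt
    exact ih (p, s) hmem (Pf.bVarsLT_apps.1 hn |>.2 p (List.of_mem_zip hmem).1)

end PfRep

/-- The realizer `t` of the proof term `e` relative to the fresh variables `ys`: `f_κ(ȳ)` if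
`e = κ`, and `⟦n⟧_{[ȳ/ā]}` if `e = λā.n` with `n` mentioning only the bound variables `ā`. -/
def Realizes (fsym : ℕ → ℕ) (ys : List ℕ) (e : Pf) (t : Tm) : Prop :=
  (∃ κ, e = .const κ ∧ t = .fn (fsym κ) (ys.map Tm.var)) ∨
    ∃ n, e = Pf.lams ys.length n ∧ n.BVarsLT ys.length ∧ PfRep fsym (mkPhi ys) n t

namespace Realizes

variable {fsym : ℕ → ℕ} {ys : List ℕ} {e : Pf} {t : Tm}

theorem rename (h : Realizes fsym ys e t) (hys : ys.Nodup) {ys' : List ℕ}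
    (hlen : ys'.length = ys.length) (σ : Subst) :
    Realizes fsym ys' e (t.subst (Subst.updateList ys (ys'.map Tm.var) σ)) := by
  have hvs : (ys'.map Tm.var).length = ys.length := by simp [hlen]
  rcases h with ⟨κ, rfl, rfl⟩ | ⟨n, rfl, hn, hrep⟩
  · exact .inl ⟨κ, rfl, by rw [Tm.subst_fn_s7, Subst.map_var_subst_updateList σ hys hvs]⟩
  · refine .inr ⟨n, by rw [hlen], hlen ▸ hn, hrep.subst hn fun a ha => ?_⟩
    rw [mkPhi_of_lt ha, Tm.subst_var_s7, Subst.updateList_getElem hys hvs, mkPhi_of_lt (by omega)]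
    simp [hlen]

theorem const_of_ne_lam (h : Realizes fsym ys e t) (hys : ys ≠ []) (he : ∀ r, e ≠ .lam r) :
    ∃ κ, e = .const κ ∧ t = .fn (fsym κ) (ys.map Tm.var) := by
  rcases h with h | ⟨n, rfl, -⟩
  · exact h
  · obtain ⟨y, ys, rfl⟩ := List.exists_cons_of_ne_nil hys
    exact absurd rfl (he _)

/-- The argument `e₁ ā` of a cut term represents the realizer of `e₁`. -/
theorem cutArg {ya : List ℕ} (h : Realizes fsym ya e t) (he : ya.length ≠ 0 → ∀ r, e ≠ .lam r)
    (yb : List ℕ) :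
    let a := Pf.apps (e.lift 0 (ya.length + yb.length))
      ((List.range ya.length).map fun j => .bvar (ya.length + yb.length - 1 - j))
    a.BVarsLT (ya.length + yb.length) ∧ PfRep fsym (mkPhi (ya ++ yb)) a t := by
  rcases h with ⟨κ, rfl, rfl⟩ | ⟨n, rfl, hn, hrep⟩
  · refine ⟨Pf.bVarsLT_apps.2 ⟨trivial, ?_⟩, PfRep.const_apps ?_ κ⟩
    · exact Pf.bVarsLT_of_mem_bvars (Nat.le_add_right _ _) le_rfl
    · simpa using PfRep.forall₂_bvars (fsym := fsym) [] ya yb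
  · cases ya with
    | cons => exact absurd rfl (he (by simp) _)
    | nil =>
      have hrep' := hrep.subst (σ := Subst.id) (φ' := mkPhi yb) hn fun a ha => absurd ha (by simp)
      rw [Tm.subst_id_s7] at hrep'
      simp only [List.length_nil, Nat.zero_add, List.range_zero, List.map_nil, Pf.apps,
        List.nil_append, Pf.lams]
      rw [Pf.lift_eq_self_of_bVarsLT (c := 0) hn]
      exact ⟨hn.mono (Nat.zero_le _), hrep'⟩

theorem cutTerm {ya yb : List ℕ} (h : Realizes fsym ya e t)
    (he : ya.length ≠ 0 → ∀ r, e ≠ .lam r) (κ : ℕ) :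
    Realizes fsym (ya ++ yb) (SRes.cutTerm ya.length yb.length e (.const κ))
      (.fn (fsym κ) (yb.map Tm.var ++ [t])) := by
  obtain ⟨hcl, hrep⟩ := h.cutArg he yb
  have hbs := PfRep.forall₂_bvars (fsym := fsym) ya yb []
  simp only [List.length_nil, add_zero, List.append_nil] at hbs
  rw [Realizes, List.length_append]
  refine .inr ⟨_, rfl, ⟨Pf.bVarsLT_apps.2 ⟨trivial, Pf.bVarsLT_of_mem_bvars le_rfl le_add_self⟩,
    hcl⟩, ?_⟩
  have := PfRep.const_apps (List.rel_append hbs (.cons hrep .nil)) κ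
  rwa [Pf.apps_append] at this

end Realizes

def HasRealization (fsym : ℕ → ℕ) (Φ : Prog) (e : Pf) (As : List Atom) (B : Atom) : Prop :=
  ∃ ys : List ℕ, ys.length = As.length ∧ ys.Nodup ∧ Disjoint ys.toFinset (ruleFV As B) ∧
    ∃ t, Realizes fsym ys e t ∧
      Derives (transProg fsym Φ) e (.horn (extBody As ys) (B.ext t))

namespace HasRealization

variable {fsym : ℕ → ℕ} {Φ : Prog}

theorem const {κ : ℕ} {body : List Atom} {head : Atom} (h : (κ, body, head) ∈ Φ) :
    HasRealization fsym Φ (.const κ) body head := by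
  obtain ⟨hlen, hys, hdj⟩ := freshVars_spec (ruleFV body head) body.length
  exact ⟨_, hlen, hys, hdj, _, .inl ⟨κ, rfl, rfl⟩, (Derives.ax (mem_transProg h)).horn_of_all⟩

theorem subst {e : Pf} {As : List Atom} {B : Atom} (h : HasRealization fsym Φ e As B)
    (σ : Subst) : HasRealization fsym Φ e (As.map (Atom.subst σ)) (B.subst σ) := by
  obtain ⟨ys, hlen, hys, hdj, t, hr, hd⟩ := h
  obtain ⟨hlen', hys', hdj'⟩ :=
    freshVars_spec (ruleFV (As.map (Atom.subst σ)) (B.subst σ)) As.length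
  refine ⟨_, by simpa using hlen', hys', hdj', _, hr.rename hys (hlen'.trans hlen.symm) σ, ?_⟩
  rw [extBody_eq_zipWith]
  exact hd.subst_updateList hys hdj σ (by simp [hlen, hlen'])

theorem cut {e₁ e₂ : Pf} {As Bs : List Atom} {D C : Atom} (h₁ : HasRealization fsym Φ e₁ As D)
    (h₂ : HasRealization fsym Φ e₂ (Bs ++ [D]) C)
    (hn : (cutTerm As.length Bs.length e₁ e₂).Normal) :
    HasRealization fsym Φ (cutTerm As.length Bs.length e₁ e₂) (As ++ Bs) C := by
  obtain ⟨-, -, he₂, he₁⟩ := hn.of_cutTerm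
  obtain ⟨ys₁, hlen₁, hys₁, hdj₁, t₁, hr₁, hd₁⟩ := h₁
  obtain ⟨ys₂, hlen₂, hys₂, hdj₂, t₂, hr₂, hd₂⟩ := h₂
  obtain ⟨κ, rfl, rfl⟩ := hr₂.const_of_ne_lam (by simp [← List.length_pos_iff, hlen₂]) he₂
  obtain ⟨hlen, hys, hdj⟩ := freshVars_spec (ruleFV (As ++ Bs) C) (As ++ Bs).length
  generalize freshVars (ruleFV (As ++ Bs) C) (As ++ Bs).length = ys at hlen hys hdj
  obtain ⟨ya, yb, rfl, hya⟩ : ∃ ya yb, ya ++ yb = ys ∧ ya.length = As.length :=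
    ⟨_, _, List.take_append_drop As.length ys, by simp [hlen]⟩
  have hyb : yb.length = Bs.length := by simp at hlen; omega
  set t₁' := t₁.subst (Subst.updateList ys₁ (ya.map Tm.var) Subst.id)
  have hd₁' : Derives (transProg fsym Φ) e₁ (.horn (extBody As ya) (D.ext t₁')) := by
    simpa [List.map_id'' Atom.subst_id_s7, ← extBody_eq_zipWith] using
      hd₁.subst_updateList hys₁ hdj₁ Subst.id (vs := ya.map Tm.var) (by simp [hya, hlen₁])
  have hvs : (yb.map Tm.var ++ [t₁']).length = ys₂.length := by simp [hyb, hlen₂]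
  have hd₂' : Derives (transProg fsym Φ) (.const κ)
      (.horn (extBody Bs yb ++ [D.ext t₁']) (C.ext (.fn (fsym κ) (yb.map Tm.var ++ [t₁'])))) := by
    have := hd₂.subst_updateList hys₂ hdj₂ Subst.id hvs
    rwa [Tm.subst_fn_s7, Subst.map_var_subst_updateList _ hys₂ hvs, List.map_id'' Atom.subst_id_s7,
      Atom.subst_id_s7, List.zipWith_append (by simp [hyb]), ← extBody_eq_zipWith] at this
  refine ⟨ya ++ yb, hlen, hys, hdj, .fn (fsym κ) (yb.map Tm.var ++ [t₁']), ?_, ?_⟩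
  · rw [← hya, ← hyb]
    exact (hr₁.rename hys₁ (hya.trans hlen₁.symm) Subst.id).cutTerm (hya ▸ he₁) κ
  · have := hd₁'.cut hd₂'
    rwa [extBody_length hya, extBody_length hyb, ← extBody_append hya.symm] at this

end HasRealization

def Formula.body : Formula → List Atom
  | .horn As _ | .all As _ => As

def Formula.head : Formula → Atom
  | .horn _ B | .all _ B => B

theorem Derives.hasRealization (fsym : ℕ → ℕ) {Φ : Prog} {e : Pf} {F : Formula}
    (h : Derives Φ e F) (he : e.Normal) : HasRealization fsym Φ e F.body F.head := by
  induction h with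
  | ax hmem => exact .const hmem
  | gen _ ih => exact ih he
  | inst σ _ ih => exact (ih he).subst σ
  | cut _ _ ih₁ ih₂ =>
    obtain ⟨he₁, he₂, -⟩ := he.of_cutTerm
    exact (ih₁ he₁).cut (ih₂ he₂) he

theorem realizability_preserves_typing_general (fsym : ℕ → ℕ) (Φ : Prog)
    (e : Pf) (As : List Atom) (B : Atom)
    (hnorm : Pf.Normal e)
    (h : Derives Φ e (.horn As B) ∨ Derives Φ e (.all As B)) :
    ∃ ys : List ℕ, ys.length = As.length ∧ ys.Nodup ∧
      Disjoint ys.toFinset (ruleFV As B) ∧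
      ∃ t : Tm,
        ((∃ κ, e = .const κ ∧ t = .fn (fsym κ) (ys.map Tm.var)) ∨
          (∃ n : Pf, e = Pf.lams As.length n ∧ n.FirstOrder ∧
            PfRep fsym (mkPhi ys) n t)) ∧
        (Derives Φ e (.horn As B) →
          Derives (transProg fsym Φ) e (.horn (extBody As ys) (B.ext t))) ∧
        (Derives Φ e (.all As B) →
          Derives (transProg fsym Φ) e (.all (extBody As ys) (B.ext t))) := by
  obtain ⟨ys, hlen, hys, hdj, t, hr, hd⟩ : HasRealization fsym Φ e As B :=
    h.elim (·.hasRealization fsym hnorm) (·.hasRealization fsym hnorm)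
  refine ⟨ys, hlen, hys, hdj, t, ?_, fun _ => hd, fun _ => hd.gen⟩
  rcases hr with hconst | ⟨n, rfl, -, hrep⟩
  · exact .inl hconst
  · exact .inr ⟨n, by rw [hlen], hrep.firstOrder, hrep⟩

/-- The realizability transformation preserves provability: if
`e : [∀x̄.] A1,...,Am ⇒ B` is derivable from `Φ` with `e` β-normal, then for fresh
distinct variables `y1,...,ym` the transformed judgment
`e : [∀x̄∀ȳ.] A1[y1],...,Am[ym] ⇒ B[t]` is derivable from `F(Φ)`, where
`t = f_κ(y1,...,ym)` if `e = κ` and `t = ⟦n⟧_{[ȳ/ā]}` if `e = λā.n`. -/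
theorem realizability_preserves_typing (fsym : ℕ → ℕ) (Φ : Prog)
    (hf : FreshSyms fsym Φ) (e : Pf) (As : List Atom) (B : Atom)
    (hnorm : Pf.Normal e)
    (h : Derives Φ e (.horn As B) ∨ Derives Φ e (.all As B)) :
    ∃ ys : List ℕ, ys.length = As.length ∧ ys.Nodup ∧
      Disjoint ys.toFinset (ruleFV As B) ∧
      ∃ t : Tm,
        ((∃ κ, e = .const κ ∧ t = .fn (fsym κ) (ys.map Tm.var)) ∨
          (∃ n : Pf, e = Pf.lams As.length n ∧ n.FirstOrder ∧
            PfRep fsym (mkPhi ys) n t)) ∧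
        (Derives Φ e (.horn As B) →
          Derives (transProg fsym Φ) e (.horn (extBody As ys) (B.ext t))) ∧
        (Derives Φ e (.all As B) →
          Derives (transProg fsym Φ) e (.all (extBody As ys) (B.ext t))) :=
  realizability_preserves_typing_general fsym Φ e As B hnorm h

end SRes
end
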